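/- arXiv:2012.12055 — 2 statements merged into one kernel-verified Lean document; each statement's English description precedes it below -/
import Mathlib

section
/- Let X be a set and φ a flow on X. Let S ⊆ X and a > 0 satisfy: (i) for every p ∈ S there exists t ∈ (0, a] with φ t p ∈ S (return time to S from S is bounded by a); (ii) for every q ∈ X there exists s ≥ 0 with φ (−s) q ∈ S (every backward orbit meets S); (iii) for every p ∈ X the set {t ∈ ℝ : φ t p ∈ S} is closed in ℝ. Then for every q ∈ X there exists t ∈ [0, a] with φ t q ∈ S, i.e. every forward orbit meets S within time a. -/
/-- Suppose a flow `φ` on `X` and a set `S` satisfy: (i) the return time to `S`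
starting from points of `S` is bounded by `a`; (ii) every backward orbit meets `S`;
(iii) the set of times at which a given orbit lies in `S` is closed. Then every forward orbit
meets `S` within time `a`. -/
theorem flow_forward_orbit_meets_section
    {X : Type*} (φ : ℝ → X → X)
    (hφ0 : ∀ p, φ 0 p = p)
    (hφadd : ∀ s t p, φ (s + t) p = φ s (φ t p))
    (S : Set X) (a : ℝ) (ha : 0 < a)
    (hret : ∀ p ∈ S, ∃ t : ℝ, 0 < t ∧ t ≤ a ∧ φ t p ∈ S)
    (hback : ∀ q : X, ∃ s : ℝ, 0 ≤ s ∧ φ (-s) q ∈ S)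
    (hclosed : ∀ p : X, IsClosed {t : ℝ | φ t p ∈ S}) :
    ∀ q : X, ∃ t : ℝ, t ∈ Set.Icc 0 a ∧ φ t q ∈ S := by
  intro q
  obtain ⟨s, hs0, hsS⟩ := hback q
  set T : Set ℝ := {t : ℝ | φ t q ∈ S} ∩ Set.Iic 0 with hT
  have hTne : T.Nonempty := ⟨-s, hsS, by simpa using hs0⟩
  have hTbdd : BddAbove T := ⟨0, fun t ht => ht.2⟩
  have hTclosed : IsClosed T := (hclosed q).inter isClosed_Iic
  have hc : sSup T ∈ T := hTclosed.csSup_mem hTne hTbdd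
  set c := sSup T with hcdef
  obtain ⟨hcS, hc0⟩ := hc
  have hc0' : c ≤ 0 := hc0
  obtain ⟨u, hu0, hua, huS⟩ := hret (φ c q) hcS
  have hsum : φ (u + c) q ∈ S := by rw [hφadd]; exact huS
  rcases le_or_gt (u + c) 0 with h | h
  · exfalso
    have : u + c ≤ c := le_csSup hTbdd ⟨hsum, h⟩
    linarith
  · exact ⟨u + c, ⟨h.le, by linarith⟩, hsum⟩
end

section
/- Let (X, 𝒜) be a measurable space, φ : ℝ → X → X a flow such that the map (t, p) ↦ φ t p is measurable (jointly, with the Borel σ-algebra on ℝ), and μ a finite measure on X such that φ t is measure preserving for μ for every t ∈ ℝ. Let S ∈ 𝒜 and ε > 0 be such that for every p ∈ S and every t with 0 < t < ε one has φ t p ∉ S. Then μ(S) = 0. -/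
open MeasureTheory

/-- A measurable set `S` which no orbit revisits within time `ε > 0`
(a "transverse section") has measure zero with respect to every finite invariant measure
of a jointly measurable flow. -/
theorem measure_zero_of_no_quick_return
    {X : Type*} [MeasurableSpace X]
    (φ : ℝ → X → X)
    (hφ0 : ∀ p, φ 0 p = p)
    (hφadd : ∀ s t p, φ (s + t) p = φ s (φ t p))
    (hφmeas : Measurable (fun q : ℝ × X => φ q.1 q.2))
    (μ : Measure X) [IsFiniteMeasure μ]
    (hinv : ∀ t : ℝ, MeasurePreserving (φ t) μ μ)
    (S : Set X) (hS : MeasurableSet S)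
    (ε : ℝ) (hε : 0 < ε)
    (hno : ∀ p ∈ S, ∀ t : ℝ, 0 < t → t < ε → φ t p ∉ S) :
    μ S = 0 := by
  classical
  set A : Set (ℝ × X) := {q | q.1 ∈ Set.Ico 0 ε ∧ φ q.1 q.2 ∈ S} with hA
  have hAmeas : MeasurableSet A :=
    (measurableSet_Ico.preimage measurable_fst).inter (hφmeas hS)
  -- Each x-section is a subsingleton, hence Lebesgue-null.
  have hsub : ∀ x : X, ((fun t => (t, x)) ⁻¹' A).Subsingleton := by
    intro x t1 ht1 t2 ht2
    have key : ∀ s1 s2 : ℝ, s1 ∈ (fun t => (t, x)) ⁻¹' A →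
        s2 ∈ (fun t => (t, x)) ⁻¹' A → s1 < s2 → False := by
      intro s1 s2 hs1 hs2 hlt
      obtain ⟨⟨h10, h1e⟩, h1S⟩ := hs1
      obtain ⟨⟨h20, h2e⟩, h2S⟩ := hs2
      have : φ (s2 - s1) (φ s1 x) ∈ S := by
        rw [← hφadd]; simpa using h2S
      exact hno _ h1S (s2 - s1) (by linarith) (by linarith) this
    rcases lt_trichotomy t1 t2 with h | h | h
    · exact absurd (key t1 t2 ht1 ht2 h) not_false
    · exact h
    · exact absurd (key t2 t1 ht2 ht1 h) not_false
  have hside1 : (volume.prod μ) A = 0 := by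
    rw [Measure.prod_apply_symm hAmeas]
    rw [lintegral_eq_zero_iff (measurable_measure_prodMk_right hAmeas)]
    exact Filter.Eventually.of_forall fun x => (hsub x).measure_zero _
  have hside2 : (volume.prod μ) A = ENNReal.ofReal ε * μ S := by
    rw [Measure.prod_apply hAmeas]
    have : ∀ t : ℝ, μ (Prod.mk t ⁻¹' A) =
        Set.indicator (Set.Ico (0:ℝ) ε) (fun _ => μ S) t := by
      intro t
      by_cases ht : t ∈ Set.Ico (0:ℝ) ε
      · have : Prod.mk t ⁻¹' A = φ t ⁻¹' S := by
          ext x; simp [hA, ht.1, ht.2]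
        rw [this, (hinv t).measure_preimage hS.nullMeasurableSet,
          Set.indicator_of_mem ht]
      · have : Prod.mk t ⁻¹' A = ∅ := by
          ext x
          simp only [hA, Set.mem_preimage, Set.mem_setOf_eq,
            Set.mem_empty_iff_false, iff_false, not_and]
          exact fun h _ => absurd h ht
        rw [this, Set.indicator_of_notMem ht]; simp
    simp_rw [this]
    rw [lintegral_indicator measurableSet_Ico, setLIntegral_const]
    simp [Real.volume_Ico, mul_comm]
  rw [hside1] at hside2
  have := hside2.symm
  rcases mul_eq_zero.mp this with h | h
  · rw [ENNReal.ofReal_eq_zero] at h; linarith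
  · exact h
end
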